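/- Let f : ℝ^n → ℝ be convex, differentiable with L_f-Lipschitz continuous gradient and strongly convex with some parameter σ_f > 0, and let H_y be a real p×n matrix such that the smallest eigenvalue λ_min of H_y H_yᵀ is strictly positive (equivalently, H_yᵀ is injective). Then F : ℝ^p → ℝ defined by F(μ) = f⋆(H_yᵀ μ) is strongly convex with parameter λ_min / L_f. (Strong-convexity part of Lemma 3.) -/

import Mathlib

/-!
If `∇f` is `L`-Lipschitz, the descent lemma `f (x + d) ≤ f x + ⟪∇f x, d⟫ + L/2 ‖d‖²` at the points
`x + (1 - l) u` and `x - l u`, with `u = (y₁ - y₂) / L`, bounds each term `⟪y, x⟫ - f x` of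
`f⋆(l y₁ + (1 - l) y₂)` by `l f⋆(y₁) + (1 - l) f⋆(y₂) - l (1 - l) ‖y₁ - y₂‖² / (2L)`; so `f⋆` is
`1/L`-strongly convex. Strong convexity of `f` only serves to make these suprema finite
(`realConj` is a real `⨆`, which is `0` when unbounded), through the quadratic lower bound it
gives on `f`. Since `‖Hᵀ μ‖² = μᵀ H Hᵀ μ ≥ λ_min ‖μ‖²`, precomposing with `Hᵀ` multiplies the
parameter by `λ_min`.
-/

open scoped RealInnerProductSpace
open Matrix

/-- The Fenchel conjugate as a real-valued function (valid whenever the supremum is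
finite, which holds for continuous strongly convex `f`). -/
noncomputable def realConj {q : ℕ} (f : EuclideanSpace ℝ (Fin q) → ℝ)
    (y : EuclideanSpace ℝ (Fin q)) : ℝ :=
  ⨆ x, (⟪y, x⟫ - f x)

/-- `h` is strongly convex with parameter `σ`. -/
def StronglyConvexWith {E : Type*} [NormedAddCommGroup E] [NormedSpace ℝ E]
    (σ : ℝ) (h : E → ℝ) : Prop :=
  ∀ x y : E, ∀ l : ℝ, 0 ≤ l → l ≤ 1 →
    h (l • x + (1 - l) • y) ≤ l * h x + (1 - l) * h y - σ / 2 * (l * (1 - l) * ‖x - y‖ ^ 2)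

/-- `eigMinMulT H` is the smallest eigenvalue of `H Hᵀ`. -/
noncomputable def eigMinMulT {m n : Type*} [Fintype m] [Fintype n] [DecidableEq m]
    (H : Matrix m n ℝ) : ℝ :=
  ⨅ i, ((H.conjTranspose_eq_transpose_of_trivial ▸ isHermitian_mul_conjTranspose_self H :
      (H * Hᵀ).IsHermitian)).eigenvalues i

open Filter Topology

section InnerProductSpace

variable {E : Type*} [NormedAddCommGroup E] [InnerProductSpace ℝ E] [CompleteSpace E]
  {f : E → ℝ}

theorem HasGradientAt.hasDerivAt_comp_add_smul {g a d : E} {t : ℝ}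
    (hf : HasGradientAt f g (a + t • d)) :
    HasDerivAt (fun s : ℝ => f (a + s • d)) ⟪g, d⟫ t := by
  have hline : HasDerivAt (fun s : ℝ => a + s • d) d t := by
    simpa using ((hasDerivAt_id t).smul_const d).const_add a
  simpa [Function.comp_def] using hf.hasFDerivAt.comp_hasDerivAt t hline

theorem le_add_inner_add_of_lipschitz_gradient {f' : E → E} {L : ℝ}
    (hf : ∀ x, HasGradientAt f (f' x) x) (hlip : ∀ x y, ‖f' x - f' y‖ ≤ L * ‖x - y‖)
    (a d : E) : f (a + d) ≤ f a + ⟪f' a, d⟫ + L / 2 * ‖d‖ ^ 2 := by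
  set φ : ℝ → ℝ := fun t => f (a + t • d) - t * ⟪f' a, d⟫ - L / 2 * t ^ 2 * ‖d‖ ^ 2
  have hφ : ∀ t, HasDerivAt φ (⟪f' (a + t • d), d⟫ - ⟪f' a, d⟫ - L * t * ‖d‖ ^ 2) t := by
    intro t
    refine ((((hf (a + t • d)).hasDerivAt_comp_add_smul).sub
      ((hasDerivAt_id t).mul_const ⟪f' a, d⟫)).sub
      (((hasDerivAt_pow 2 t).const_mul (L / 2)).mul_const (‖d‖ ^ 2))).congr_deriv ?_
    push_cast; ring
  have hφ' : ∀ t ∈ interior (Set.Ici (0 : ℝ)),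
      ⟪f' (a + t • d), d⟫ - ⟪f' a, d⟫ - L * t * ‖d‖ ^ 2 ≤ 0 := by
    intro t ht
    rw [interior_Ici, Set.mem_Ioi] at ht
    calc ⟪f' (a + t • d), d⟫ - ⟪f' a, d⟫ - L * t * ‖d‖ ^ 2
        = ⟪f' (a + t • d) - f' a, d⟫ - L * t * ‖d‖ ^ 2 := by rw [inner_sub_left]
      _ ≤ ‖f' (a + t • d) - f' a‖ * ‖d‖ - L * t * ‖d‖ ^ 2 := by
          gcongr; exact real_inner_le_norm _ _
      _ ≤ L * ‖t • d‖ * ‖d‖ - L * t * ‖d‖ ^ 2 := by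
          gcongr; simpa using hlip (a + t • d) a
      _ = 0 := by rw [norm_smul, Real.norm_of_nonneg ht.le]; ring
  have hanti : AntitoneOn φ (Set.Ici 0) :=
    antitoneOn_of_hasDerivWithinAt_nonpos (convex_Ici 0)
      (fun t _ => (hφ t).continuousAt.continuousWithinAt)
      (fun t _ => (hφ t).hasDerivWithinAt) hφ'
  have hφ01 := hanti Set.self_mem_Ici (Set.mem_Ici.2 zero_le_one) zero_le_one
  simp only [φ, one_smul, one_mul, one_pow, mul_one, zero_smul, add_zero, zero_mul, sub_zero,
    ne_eq, OfNat.ofNat_ne_zero, not_false_eq_true, zero_pow, mul_zero] at hφ01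
  linarith

theorem mul_add_mul_le_of_lipschitz_gradient {f' : E → E} {L : ℝ}
    (hf : ∀ x, HasGradientAt f (f' x) x) (hlip : ∀ x y, ‖f' x - f' y‖ ≤ L * ‖x - y‖)
    (x u : E) {l : ℝ} (hl0 : 0 ≤ l) (hl1 : l ≤ 1) :
    l * f (x + (1 - l) • u) + (1 - l) * f (x - l • u) ≤ f x + L / 2 * (l * (1 - l) * ‖u‖ ^ 2) := by
  have h₁ := le_add_inner_add_of_lipschitz_gradient hf hlip x ((1 - l) • u)
  have h₂ := le_add_inner_add_of_lipschitz_gradient hf hlip x (-(l • u))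
  rw [← sub_eq_add_neg] at h₂
  rw [inner_smul_right, norm_smul, Real.norm_of_nonneg (sub_nonneg.2 hl1)] at h₁
  rw [inner_neg_right, inner_smul_right, norm_neg, norm_smul, Real.norm_of_nonneg hl0] at h₂
  have : 0 ≤ 1 - l := sub_nonneg.2 hl1
  linear_combination l * h₁ + (1 - l) * h₂

theorem StronglyConvexWith.add_inner_add_le {σ : ℝ} (hf : StronglyConvexWith σ f) {a g : E}
    (hg : HasGradientAt f g a) (x : E) :
    f a + ⟪g, x - a⟫ + σ / 2 * ‖x - a‖ ^ 2 ≤ f x := by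
  have hderiv : HasDerivAt (fun l : ℝ => f (a + l • (x - a))) ⟪g, x - a⟫ 0 :=
    (by simpa using hg : HasGradientAt f g (a + (0 : ℝ) • (x - a))).hasDerivAt_comp_add_smul
  have hslope : Tendsto (fun l : ℝ => (f (a + l • (x - a)) - f a) / l) (𝓝[>] 0)
      (𝓝 ⟪g, x - a⟫) := by
    refine ((hasDerivAt_iff_tendsto_slope.mp hderiv).mono_left
      (nhdsWithin_mono 0 fun t ht => ne_of_gt ht)).congr' ?_
    filter_upwards [self_mem_nhdsWithin] with l hl
    simp [slope_def_field, div_eq_inv_mul]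
  have hbound : Tendsto (fun l : ℝ => f x - f a - σ / 2 * ((1 - l) * ‖x - a‖ ^ 2)) (𝓝[>] 0)
      (𝓝 (f x - f a - σ / 2 * ‖x - a‖ ^ 2)) := by
    have : Continuous fun l : ℝ => f x - f a - σ / 2 * ((1 - l) * ‖x - a‖ ^ 2) := by fun_prop
    simpa using (this.tendsto 0).mono_left nhdsWithin_le_nhds
  have key : ⟪g, x - a⟫ ≤ f x - f a - σ / 2 * ‖x - a‖ ^ 2 := by
    refine le_of_tendsto_of_tendsto hslope hbound ?_
    filter_upwards [Ioc_mem_nhdsGT zero_lt_one] with l hl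
    have hsc := hf x a l hl.1.le hl.2
    rw [show l • x + (1 - l) • a = a + l • (x - a) by module] at hsc
    rw [div_le_iff₀ hl.1]
    nlinarith
  linarith

theorem StronglyConvexWith.bddAbove_range_inner_sub {σ : ℝ} (hσ : 0 < σ)
    (hf : StronglyConvexWith σ f) {a g : E} (hg : HasGradientAt f g a) (y : E) :
    BddAbove (Set.range fun x => ⟪y, x⟫ - f x) := by
  refine ⟨⟪y, a⟫ - f a + ‖y - g‖ ^ 2 / (2 * σ), ?_⟩
  rintro _ ⟨x, rfl⟩
  have hlow := hf.add_inner_add_le hg x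
  have hcs : ⟪y - g, x - a⟫ ≤ ‖y - g‖ * ‖x - a‖ := real_inner_le_norm _ _
  have hamgm : ‖y - g‖ * ‖x - a‖ ≤ ‖y - g‖ ^ 2 / (2 * σ) + σ / 2 * ‖x - a‖ ^ 2 := by
    rw [div_add' _ _ _ (by positivity), le_div_iff₀ (by positivity)]
    nlinarith [sq_nonneg (‖y - g‖ - σ * ‖x - a‖)]
  have : ⟪y, x⟫ = ⟪y, a⟫ + ⟪y - g, x - a⟫ + ⟪g, x - a⟫ := by
    rw [inner_sub_left, inner_sub_right, inner_sub_right]; ring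
  linarith

end InnerProductSpace

theorem StronglyConvexWith.comp_linearMap {E F : Type*} [NormedAddCommGroup E] [NormedSpace ℝ E]
    [NormedAddCommGroup F] [NormedSpace ℝ F] {σ c : ℝ} {g : F → ℝ}
    (hg : StronglyConvexWith σ g) (hσ : 0 ≤ σ) (A : E →ₗ[ℝ] F)
    (hA : ∀ v, c * ‖v‖ ^ 2 ≤ ‖A v‖ ^ 2) : StronglyConvexWith (σ * c) (g ∘ A) := by
  intro x y l hl0 hl1
  have hcoef : 0 ≤ σ / 2 * (l * (1 - l)) :=
    mul_nonneg (by positivity) (mul_nonneg hl0 (sub_nonneg.2 hl1))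
  have hgrowth := mul_le_mul_of_nonneg_left (hA (x - y)) hcoef
  have hsc := hg (A x) (A y) l hl0 hl1
  rw [← map_sub] at hsc
  simp only [Function.comp_apply, map_add, map_smul]
  linear_combination hsc + hgrowth

theorem stronglyConvexWith_realConj {q : ℕ} {f : EuclideanSpace ℝ (Fin q) → ℝ}
    {f' : EuclideanSpace ℝ (Fin q) → EuclideanSpace ℝ (Fin q)} {L σ : ℝ} (hL : 0 < L)
    (hf : ∀ x, HasGradientAt f (f' x) x) (hlip : ∀ x y, ‖f' x - f' y‖ ≤ L * ‖x - y‖)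
    (hσ : 0 < σ) (hsc : StronglyConvexWith σ f) : StronglyConvexWith (1 / L) (realConj f) := by
  intro y₁ y₂ l hl0 hl1
  have hbdd := hsc.bddAbove_range_inner_sub hσ (hf 0)
  refine ciSup_le fun x => ?_
  set u := L⁻¹ • (y₁ - y₂)
  have h₁ : ⟪y₁, x + (1 - l) • u⟫ - f (x + (1 - l) • u) ≤ realConj f y₁ := le_ciSup (hbdd y₁) _
  have h₂ : ⟪y₂, x - l • u⟫ - f (x - l • u) ≤ realConj f y₂ := le_ciSup (hbdd y₂) _
  have hmid := mul_add_mul_le_of_lipschitz_gradient hf hlip x u hl0 hl1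
  have hinner : ⟪y₁, u⟫ - ⟪y₂, u⟫ = 1 / L * ‖y₁ - y₂‖ ^ 2 := by
    rw [← inner_sub_left, inner_smul_right, real_inner_self_eq_norm_sq, one_div]
  have hquad : L / 2 * ‖u‖ ^ 2 = 1 / L / 2 * ‖y₁ - y₂‖ ^ 2 := by
    rw [norm_smul, Real.norm_of_nonneg (inv_nonneg.2 hL.le)]
    field_simp
  simp only [inner_add_left, inner_add_right, inner_sub_right, real_inner_smul_left,
    real_inner_smul_right] at h₁ h₂ ⊢
  have : 0 ≤ 1 - l := sub_nonneg.2 hl1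
  linear_combination l * h₁ + (1 - l) * h₂ + hmid - l * (1 - l) * hinner + l * (1 - l) * hquad

theorem Matrix.IsHermitian.iInf_eigenvalues_mul_dotProduct_self_le {m : Type*} [Fintype m]
    [DecidableEq m] {A : Matrix m m ℝ} (hA : A.IsHermitian) (x : m → ℝ) :
    (⨅ i, hA.eigenvalues i) * (x ⬝ᵥ x) ≤ x ⬝ᵥ (A *ᵥ x) := by
  set c := ⨅ i, hA.eigenvalues i
  have hpsd : (A - algebraMap ℝ (Matrix m m ℝ) c).PosSemidef := by
    refine posSemidef_iff_isHermitian_and_spectrum_nonneg.mpr ⟨hA.sub ?_, ?_⟩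
    · simpa only [Algebra.algebraMap_eq_smul_one] using isHermitian_one.smul (IsSelfAdjoint.all c)
    · rw [← spectrum.sub_singleton_eq, hA.spectrum_real_eq_range_eigenvalues]
      rintro _ ⟨_, ⟨i, rfl⟩, _, rfl, rfl⟩
      exact sub_nonneg.2 (ciInf_le (Set.finite_range hA.eigenvalues).bddBelow i)
  have hquad := hpsd.dotProduct_mulVec_nonneg x
  simp only [star_trivial, sub_mulVec, dotProduct_sub, Algebra.algebraMap_eq_smul_one, smul_mulVec,
    one_mulVec, dotProduct_smul, smul_eq_mul] at hquad
  linarith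

theorem eigMinMulT_mul_norm_sq_le {m n : Type*} [Fintype m] [Fintype n] [DecidableEq m]
    (H : Matrix m n ℝ) (v : EuclideanSpace ℝ m) :
    eigMinMulT H * ‖v‖ ^ 2 ≤ ‖toEuclideanLin Hᵀ v‖ ^ 2 := by
  have key := IsHermitian.iInf_eigenvalues_mul_dotProduct_self_le
    (H.conjTranspose_eq_transpose_of_trivial ▸ isHermitian_mul_conjTranspose_self H :
      (H * Hᵀ).IsHermitian) (WithLp.ofLp v)
  rw [← mulVec_mulVec, dotProduct_mulVec, ← mulVec_transpose, dotProduct_comm] at key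
  rw [← real_inner_self_eq_norm_sq, ← real_inner_self_eq_norm_sq]
  exact key

theorem dual_function_strongly_convex_general
    {n p : ℕ} (f : EuclideanSpace ℝ (Fin n) → ℝ)
    (Lf : ℝ) (hLf : 0 < Lf)
    (f' : EuclideanSpace ℝ (Fin n) → EuclideanSpace ℝ (Fin n))
    (hdiff : ∀ x, HasGradientAt f (f' x) x)
    (hlip : ∀ x y, ‖f' x - f' y‖ ≤ Lf * ‖x - y‖)
    (σf : ℝ) (hσ : 0 < σf) (hf_sc : StronglyConvexWith σf f)
    (Hy : Matrix (Fin p) (Fin n) ℝ)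
    (F : EuclideanSpace ℝ (Fin p) → ℝ)
    (hF : ∀ μ, F μ = realConj f (WithLp.toLp 2 (Hyᵀ.mulVec μ))) :
    StronglyConvexWith (eigMinMulT Hy / Lf) F := by
  rw [show F = realConj f ∘ toEuclideanLin Hyᵀ from funext hF, ← one_div_mul_eq_div]
  exact (stronglyConvexWith_realConj hLf hdiff hlip hσ hf_sc).comp_linearMap (by positivity)
    (toEuclideanLin Hyᵀ) (eigMinMulT_mul_norm_sq_le Hy)

/-- For `f : ℝ^n → ℝ` convex, differentiable with `L_f`-Lipschitz
gradient and strongly convex with parameter `σ_f > 0`, and `H_y` a real `p×n` matrix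
with `λ_min(H_y H_yᵀ) > 0`, the function `F(μ) = f⋆(H_yᵀ μ)` is strongly convex
with parameter `λ_min(H_y H_yᵀ)/L_f`. -/
theorem dual_function_strongly_convex
    {n p : ℕ} (f : EuclideanSpace ℝ (Fin n) → ℝ)
    (hconv : ConvexOn ℝ Set.univ f)
    (Lf : ℝ) (hLf : 0 < Lf)
    (f' : EuclideanSpace ℝ (Fin n) → EuclideanSpace ℝ (Fin n))
    (hdiff : ∀ x, HasGradientAt f (f' x) x)
    (hlip : ∀ x y, ‖f' x - f' y‖ ≤ Lf * ‖x - y‖)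
    (σf : ℝ) (hσ : 0 < σf) (hf_sc : StronglyConvexWith σf f)
    (Hy : Matrix (Fin p) (Fin n) ℝ) (hmin : 0 < eigMinMulT Hy)
    (F : EuclideanSpace ℝ (Fin p) → ℝ)
    (hF : ∀ μ, F μ = realConj f (WithLp.toLp 2 (Hyᵀ.mulVec μ))) :
    StronglyConvexWith (eigMinMulT Hy / Lf) F :=
  dual_function_strongly_convex_general f Lf hLf f' hdiff hlip σf hσ hf_sc Hy F hF
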